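/- arXiv:1808.06330 — 5 statements merged into one kernel-verified Lean document; each statement's English description precedes it below -/
import Mathlib

section
/- Suppose r ≥ 1 and let K_2 be any real number with 0 < K_2 < 1/r. Then there exist infinitely many positive integers n such that every multi-base representation of n has Hamming weight at least K_2 · (log n)/(log log n). -/
/-- `B` is a power-product of the bases `b 0, …, b (r-1)`. -/
def IsPowerProduct (r : ℕ) (b : Fin r → ℕ) (B : ℕ) : Prop :=
  ∃ α : Fin r → ℕ, B = ∏ j, b j ^ α j

/-- `d` is a multi-base representation of `n` with bases `b` and digit set `D`. -/
def IsMultiBaseRepr (r : ℕ) (b : Fin r → ℕ) (D : Finset ℕ) (n : ℕ) (d : ℕ →₀ ℕ) : Prop :=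
  (∀ B, d B ∈ D) ∧ (∀ B ∈ d.support, IsPowerProduct r b B) ∧
    n = ∑ B ∈ d.support, d B * B

/-
A number `n ≤ x` having a representation of weight at most `k` is the digit-weighted sum over the
graph of that representation, a set of at most `k` pairs (power-product `≤ x`, digit). There are at
most `(log₂ x + 1)^r` power-products up to `x`, hence at most `((log₂ x + 1)^r |D| + 1)^k` such `n`.
For `k = ⌊K₂ log x / (log log x - log 2)⌋` this is `x^(K₂ r + o(1)) ≤ x / 2`, so some `n` in
`(√x, x]` needs weight more than `k`, and on that interval `K₂ log n / log log n` is at most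
`K₂ log x / (log log x - log 2)`.
-/

open Finset Filter Real

section

open scoped Classical

lemma card_filter_isPowerProduct_le (r : ℕ) (b : Fin r → ℕ) (hb : ∀ j, 1 < b j) (x : ℕ) :
    #{B ∈ range (x + 1) | IsPowerProduct r b B} ≤ (Nat.log 2 x + 1) ^ r := by
  let exponents := Fintype.piFinset fun _ : Fin r => range (Nat.log 2 x + 1)
  calc #{B ∈ range (x + 1) | IsPowerProduct r b B}
      ≤ #(exponents.image fun α => ∏ j, b j ^ α j) := by
        refine card_le_card fun B hB => ?_
        obtain ⟨hBx, α, rfl⟩ := mem_filter.1 hB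
        refine mem_image.2 ⟨α, Fintype.mem_piFinset.2 fun j => ?_, rfl⟩
        refine mem_range_succ_iff.2 (Nat.le_log_of_pow_le one_lt_two ?_)
        calc 2 ^ α j ≤ b j ^ α j := Nat.pow_le_pow_left (hb j) _
          _ ≤ ∏ i, b i ^ α i :=
            single_le_prod' (fun i _ => Nat.one_le_pow _ _ (hb i).le) (mem_univ j)
          _ ≤ x := mem_range_succ_iff.1 hBx
    _ ≤ #exponents := card_image_le
    _ = (Nat.log 2 x + 1) ^ r := by simp [exponents]

lemma card_filter_powerset_card_le {α : Type*} (s : Finset α) (k : ℕ) :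
    #{t ∈ s.powerset | #t ≤ k} ≤ (#s + 1) ^ k := by
  calc #{t ∈ s.powerset | #t ≤ k}
      = ∑ j ∈ range (k + 1), #{t ∈ {t ∈ s.powerset | #t ≤ k} | #t = j} :=
        card_eq_sum_card_fiberwise fun t ht => mem_range_succ_iff.2 (mem_filter.1 ht).2
    _ ≤ ∑ j ∈ range (k + 1), #s ^ j * 1 ^ (k - j) * k.choose j := by
        refine sum_le_sum fun j hj => ?_
        calc #{t ∈ {t ∈ s.powerset | #t ≤ k} | #t = j}
            ≤ #(s.powersetCard j) := card_le_card fun t ht => by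
              simp only [mem_filter, mem_powerset] at ht
              exact mem_powersetCard.2 ⟨ht.1.1, ht.2⟩
          _ ≤ #s ^ j := by rw [card_powersetCard]; exact Nat.choose_le_pow _ _
          _ ≤ #s ^ j * 1 ^ (k - j) * k.choose j := by
            rw [one_pow, mul_one]
            exact Nat.le_mul_of_pos_right _ (Nat.choose_pos (mem_range_succ_iff.1 hj))
    _ = (#s + 1) ^ k := (add_pow _ _ _).symm

def HasReprOfWeightLE (r : ℕ) (b : Fin r → ℕ) (D : Finset ℕ) (k n : ℕ) : Prop :=
  ∃ d : ℕ →₀ ℕ, IsMultiBaseRepr r b D n d ∧ #d.support ≤ k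

lemma card_filter_hasReprOfWeightLE_le (r : ℕ) (b : Fin r → ℕ) (hb : ∀ j, 1 < b j)
    (D : Finset ℕ) (k x : ℕ) :
    #{n ∈ range (x + 1) | HasReprOfWeightLE r b D k n} ≤
      ((Nat.log 2 x + 1) ^ r * #D + 1) ^ k := by
  let P := {B ∈ range (x + 1) | IsPowerProduct r b B}
  calc #{n ∈ range (x + 1) | HasReprOfWeightLE r b D k n}
      ≤ #({t ∈ (P ×ˢ D).powerset | #t ≤ k}.image fun t => ∑ p ∈ t, p.2 * p.1) := by
        refine card_le_card fun n hn => ?_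
        obtain ⟨hnx, d, ⟨hdD, hdB, hn⟩, hdk⟩ := mem_filter.1 hn
        refine mem_image.2 ⟨d.graph, mem_filter.2 ⟨mem_powerset.2 fun p hp => ?_, ?_⟩, ?_⟩
        · obtain ⟨B, hB, rfl⟩ := mem_map.1 hp
          have hBn : B ≤ n := by
            calc B ≤ d B * B :=
                  Nat.le_mul_of_pos_left B (Nat.pos_of_ne_zero (Finsupp.mem_support_iff.1 hB))
              _ ≤ n := hn ▸ single_le_sum (f := fun B => d B * B) (fun _ _ => Nat.zero_le _) hB
          exact mem_product.2 ⟨mem_filter.2 ⟨mem_range_succ_iff.2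
            (hBn.trans (mem_range_succ_iff.1 hnx)), hdB B hB⟩, hdD B⟩
        · rwa [Finsupp.graph, card_map]
        · rw [Finsupp.graph, sum_map, hn]
          rfl
    _ ≤ #{t ∈ (P ×ˢ D).powerset | #t ≤ k} := card_image_le
    _ ≤ (#P * #D + 1) ^ k := card_product P D ▸ card_filter_powerset_card_le _ k
    _ ≤ ((Nat.log 2 x + 1) ^ r * #D + 1) ^ k := by
        gcongr
        exact card_filter_isPowerProduct_le r b hb x

lemma tendsto_affine_div_sub_const_atTop (R C a : ℝ) :
    Tendsto (fun u => (R * u + C) / (u - a)) atTop (nhds R) := by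
  have hden : Tendsto (fun u : ℝ => u - a) atTop atTop :=
    tendsto_atTop_add_const_right _ _ tendsto_id
  have h : Tendsto (fun u => R + (C + R * a) / (u - a)) atTop (nhds (R + 0)) :=
    tendsto_const_nhds.add (tendsto_const_nhds.div_atTop hden)
  rw [add_zero] at h
  refine h.congr' ?_
  filter_upwards [eventually_gt_atTop a] with u hu
  field_simp [sub_ne_zero.2 hu.ne']
  ring

lemma eventually_mul_div_log_sub_log_two_mul_add_log_two_lt {K R : ℝ} (hKR : K * R < 1) (C : ℝ) :
    ∀ᶠ L in atTop, K * L / (log L - log 2) * (R * log L + C) + log 2 < L := by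
  have hlim : Tendsto (fun L => K * ((R * log L + C) / (log L - log 2)) + log 2 / L) atTop
      (nhds (K * R + 0)) :=
    (((tendsto_affine_div_sub_const_atTop R C (log 2)).comp tendsto_log_atTop).const_mul K).add
      (tendsto_const_nhds.div_atTop tendsto_id)
  rw [add_zero] at hlim
  filter_upwards [hlim.eventually_lt_const hKR, eventually_gt_atTop 0] with L hL hL0
  calc K * L / (log L - log 2) * (R * log L + C) + log 2
      = L * (K * ((R * log L + C) / (log L - log 2)) + log 2 / L) := by
        field_simp
    _ < L * 1 := mul_lt_mul_of_pos_left hL hL0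
    _ = L := mul_one L

lemma log_natLog_pow_mul_add_one_le (r m x : ℕ) (hx : 3 ≤ x) :
    log (((Nat.log 2 x + 1) ^ r * m + 1 : ℕ) : ℝ) ≤
      r * log (log x) + (r * log 3 + log (m + 1)) := by
  have hL : 1 ≤ log x := by
    rw [le_log_iff_exp_le (by positivity)]
    have : (3 : ℝ) ≤ x := by exact_mod_cast hx
    linarith [exp_one_lt_d9]
  have hnat : (Nat.log 2 x : ℝ) + 1 ≤ 3 * log x := by
    have h2 : (Nat.log 2 x : ℝ) ≤ log x / log 2 := natLog_le_logb x 2 |>.trans_eq (by simp [logb])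
    have := log_two_gt_d9
    rw [le_div_iff₀ (by linarith)] at h2
    nlinarith
  have hbound : (((Nat.log 2 x + 1) ^ r * m + 1 : ℕ) : ℝ) ≤ (3 * log x) ^ r * (m + 1) := by
    have h1 : (1 : ℝ) ≤ (3 * log x) ^ r := one_le_pow₀ (by linarith)
    have h2 : ((Nat.log 2 x : ℝ) + 1) ^ r ≤ (3 * log x) ^ r :=
      pow_le_pow_left₀ (by positivity) hnat r
    push_cast
    nlinarith [Nat.cast_nonneg (α := ℝ) m]
  calc log (((Nat.log 2 x + 1) ^ r * m + 1 : ℕ) : ℝ) ≤ log ((3 * log x) ^ r * (m + 1)) :=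
        log_le_log (by positivity) hbound
    _ = r * log (log x) + (r * log 3 + log (m + 1)) := by
        rw [log_mul (by positivity) (by positivity), log_pow, log_mul (by norm_num) (by positivity)]
        ring

lemma div_log_log_le_of_le_sq {K x n : ℝ} (hK : 0 ≤ K) (hx : 2 < log x) (hn : 0 < n)
    (hxn : x ≤ n ^ 2) (hnx : n ≤ x) :
    K * log n / log (log n) ≤ K * log x / (log (log x) - log 2) := by
  have hx0 : 0 < x := hn.trans_le hnx
  have hlogn : log x / 2 ≤ log n := by
    have := log_le_log hx0 hxn
    rw [log_pow] at this
    push_cast at this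
    linarith
  have hden : 0 < log (log x) - log 2 := by
    rw [← log_div (by linarith) two_ne_zero]
    exact log_pos (by linarith)
  have hloglog : log (log x) - log 2 ≤ log (log n) := by
    rw [← log_div (by linarith) two_ne_zero]
    exact log_le_log (by linarith) hlogn
  exact div_le_div₀ (mul_nonneg hK (by linarith))
    (mul_le_mul_of_nonneg_left (log_le_log hn hnx) hK) hden hloglog

lemma eventually_two_mul_card_filter_hasReprOfWeightLE_le (r : ℕ) (b : Fin r → ℕ)
    (hb : ∀ j, 1 < b j) (D : Finset ℕ) {K : ℝ} (hK : 0 ≤ K) (hKr : K * r < 1) :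
    ∀ᶠ x : ℕ in atTop, 2 * #{n ∈ range (x + 1) |
      HasReprOfWeightLE r b D ⌊K * log x / (log (log x) - log 2)⌋₊ n} ≤ x := by
  have hlog := tendsto_log_atTop.comp (tendsto_natCast_atTop_atTop (R := ℝ))
  filter_upwards [hlog.eventually
      (eventually_mul_div_log_sub_log_two_mul_add_log_two_lt hKr (r * log 3 + log (#D + 1))),
    hlog.eventually (eventually_gt_atTop 2), eventually_ge_atTop 3] with x hmain hL hx
  simp only [Function.comp_apply] at hmain hL
  set κ := K * log x / (log (log x) - log 2)
  set M := (Nat.log 2 x + 1) ^ r * #D + 1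
  have hκ : 0 ≤ κ := div_nonneg (mul_nonneg hK (by linarith)) (by
    rw [sub_nonneg]; exact log_le_log two_pos hL.le)
  have hpow : (M : ℝ) ^ ⌊κ⌋₊ ≤ x / 2 := by
    rw [← log_le_log_iff (by positivity) (by positivity), log_pow,
      log_div (by positivity) two_ne_zero]
    have hlogM := log_natLog_pow_mul_add_one_le r #D x hx
    calc ⌊κ⌋₊ * log M ≤ κ * (r * log (log x) + (r * log 3 + log (#D + 1))) :=
          mul_le_mul (Nat.floor_le hκ) hlogM
            (log_nonneg (by exact_mod_cast Nat.le_add_left 1 _)) hκ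
      _ ≤ log x - log 2 := by linarith
  have hcount := card_filter_hasReprOfWeightLE_le r b hb D ⌊κ⌋₊ x
  have : ((2 * #{n ∈ range (x + 1) | HasReprOfWeightLE r b D ⌊κ⌋₊ n} : ℕ) : ℝ) ≤ x := by
    push_cast
    have : (#{n ∈ range (x + 1) | HasReprOfWeightLE r b D ⌊κ⌋₊ n} : ℝ) ≤ M ^ ⌊κ⌋₊ := by
      exact_mod_cast hcount
    linarith
  exact_mod_cast this

lemma eventually_exists_mem_Ioc_forall_isMultiBaseRepr (r : ℕ) (b : Fin r → ℕ)
    (hb : ∀ j, 1 < b j) (D : Finset ℕ) {K : ℝ} (hK : 0 ≤ K) (hKr : K * r < 1) :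
    ∀ᶠ x : ℕ in atTop, ∃ n ∈ Ioc (Nat.sqrt x) x, ∀ d : ℕ →₀ ℕ, IsMultiBaseRepr r b D n d →
      K * log n / log (log n) ≤ #d.support := by
  filter_upwards [eventually_two_mul_card_filter_hasReprOfWeightLE_le r b hb D hK hKr,
    (tendsto_log_atTop.comp tendsto_natCast_atTop_atTop).eventually (eventually_gt_atTop 2),
    eventually_ge_atTop 9] with x hcount hL hx
  set k := ⌊K * log x / (log (log x) - log 2)⌋₊
  have hsqrt : 2 * Nat.sqrt x < x := by
    have h3 : 3 ≤ Nat.sqrt x := Nat.le_sqrt.2 hx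
    have := Nat.sqrt_le' x
    nlinarith
  obtain ⟨n, hn, hnk⟩ : ∃ n ∈ Ioc (Nat.sqrt x) x, ¬ HasReprOfWeightLE r b D k n := by
    by_contra! h
    have hsub : Ioc (Nat.sqrt x) x ⊆ {n ∈ range (x + 1) | HasReprOfWeightLE r b D k n} :=
      fun n hn => mem_filter.2 ⟨mem_range_succ_iff.2 (mem_Ioc.1 hn).2, h n hn⟩
    have := card_le_card hsub
    rw [Nat.card_Ioc] at this
    omega
  obtain ⟨hsn, hnx⟩ := mem_Ioc.1 hn
  have hxn : x ≤ n ^ 2 := (Nat.lt_succ_sqrt' x).le.trans (Nat.pow_le_pow_left hsn 2)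
  refine ⟨n, hn, fun d hd => ?_⟩
  calc K * log n / log (log n) ≤ K * log x / (log (log x) - log 2) :=
        div_log_log_le_of_le_sq hK hL (by exact_mod_cast (Nat.zero_le _).trans_lt hsn)
          (by exact_mod_cast hxn) (by exact_mod_cast hnx)
    _ ≤ k + 1 := (Nat.lt_floor_add_one _).le
    _ ≤ #d.support := by exact_mod_cast not_le.1 fun h => hnk ⟨d, hd, h⟩

end

theorem lower_bound_minimal_hamming_weight_general
    (r : ℕ) (b : Fin r → ℕ) (hb : ∀ j, 1 < b j)
    (D : Finset ℕ)
    (K₂ : ℝ) (hK₂pos : 0 < K₂) (hK₂lt : K₂ < 1 / r) :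
    {n : ℕ | 0 < n ∧ ∀ d : ℕ →₀ ℕ, IsMultiBaseRepr r b D n d →
      K₂ * Real.log n / Real.log (Real.log n) ≤ (d.support.card : ℝ)}.Infinite := by
  have hKr : K₂ * r < 1 := by
    rcases (Nat.cast_nonneg r : (0 : ℝ) ≤ r).eq_or_lt with hr | hr
    · simp [← hr]
    · exact (lt_div_iff₀ hr).1 hK₂lt
  refine Set.infinite_of_forall_exists_gt fun N => ?_
  obtain ⟨x, hx, hNx⟩ := ((eventually_exists_mem_Ioc_forall_isMultiBaseRepr r b hb D hK₂pos.le
    hKr).and (eventually_ge_atTop (N * N))).exists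
  obtain ⟨n, hn, hweight⟩ := hx
  have hNn : N < n := (Nat.le_sqrt.2 hNx).trans_lt (mem_Ioc.1 hn).1
  exact ⟨n, ⟨by omega, hweight⟩, hNn⟩

theorem lower_bound_minimal_hamming_weight
    (r : ℕ) (hr : 1 ≤ r) (b : Fin r → ℕ) (hb : ∀ j, 1 < b j)
    (D : Finset ℕ) (hD0 : 0 ∈ D) (hD1 : 1 ∈ D)
    (K₂ : ℝ) (hK₂pos : 0 < K₂) (hK₂lt : K₂ < 1 / r) :
    {n : ℕ | 0 < n ∧ ∀ d : ℕ →₀ ℕ, IsMultiBaseRepr r b D n d →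
      K₂ * Real.log n / Real.log (Real.log n) ≤ (d.support.card : ℝ)}.Infinite :=
  lower_bound_minimal_hamming_weight_general r b hb D K₂ hK₂pos hK₂lt
end

section
/- Let p and q be integers greater than 1, set λ = log q / log p, and suppose there are positive real constants C_1 and κ such that for every integer M ≥ 1 and every interval J ⊆ [0,1] of length at least C_1 · M^{−κ}, there exists an integer m with 0 ≤ m < M and the fractional part of λ·m lying in J. Then for every integer n > 1, setting M = ⌈log n / log q⌉, there exist nonnegative integers ℓ and m with m < M such that log n − C_1 (log p) M^{−κ} ≤ ℓ · log p + m · log q ≤ log n. -/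
/-!
With `x = log n / log p` and `λ = log q / log p`, the gap hypothesis applied to the interval
`[{x} - δ, {x}]`, `δ = C₁ M^(-κ)`, gives `m < M` with `{x - λ m} ≤ δ` (take `m = 0` when
`{x} < δ`). Since `m < log n / log q`, `x - λ m` is nonnegative, and `ℓ = ⌊x - λ m⌋₊` satisfies
`x - λ m - δ ≤ ℓ ≤ x - λ m`; multiplying by `log p` gives the claim.
-/

open MeasureTheory

theorem Int.fract_sub_of_fract_le {R : Type*} [CommRing R] [LinearOrder R]
    [IsStrictOrderedRing R] [FloorRing R] {a b : R} (h : Int.fract b ≤ Int.fract a) :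
    Int.fract (a - b) = Int.fract a - Int.fract b := by
  refine Int.fract_eq_iff.2 ⟨sub_nonneg.2 h, ?_, ⌊a⌋ - ⌊b⌋, ?_⟩
  · linarith [Int.fract_lt_one a, Int.fract_nonneg b]
  · push_cast
    simp only [Int.fract]
    abel

theorem Nat.floor_eq_sub_fract {R : Type*} [Ring R] [LinearOrder R] [FloorRing R] {a : R}
    (ha : 0 ≤ a) : (⌊a⌋₊ : R) = a - Int.fract a := by
  rw [natCast_floor_eq_intCast_floor ha, Int.self_sub_fract]

theorem exists_lt_fract_sub_mul_le {θ δ : ℝ} {M : ℕ} (hM : 0 < M)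
    (hdense : ∀ a, 0 ≤ a → a + δ ≤ 1 → ∃ m < M, Int.fract (θ * m) ∈ Set.Icc a (a + δ))
    (x : ℝ) : ∃ m < M, Int.fract (x - θ * m) ≤ δ := by
  by_cases hsmall : Int.fract x < δ
  · exact ⟨0, hM, by simpa using hsmall.le⟩
  obtain ⟨m, hmM, hlow, hhigh⟩ := hdense (Int.fract x - δ) (by linarith)
    (by linarith [Int.fract_lt_one x])
  refine ⟨m, hmM, ?_⟩
  rw [Int.fract_sub_of_fract_le (by linarith)]
  linarith

theorem exists_exponents_close_to_log_general
    (p q : ℕ) (hp : 1 < p) (hq : 1 < q)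
    (C₁ κ : ℝ)
    (hgap : ∀ M : ℕ, 1 ≤ M → ∀ J : Set ℝ, J.OrdConnected → J ⊆ Set.Icc 0 1 →
      C₁ * (M : ℝ) ^ (-κ) ≤ (volume J).toReal →
      ∃ m : ℕ, m < M ∧ Int.fract ((Real.log q / Real.log p) * m) ∈ J) :
    ∀ n : ℕ, 1 < n →
      ∃ ℓ m : ℕ, m < ⌈Real.log n / Real.log q⌉₊ ∧
        Real.log n - C₁ * Real.log p * ((⌈Real.log n / Real.log q⌉₊ : ℝ)) ^ (-κ)
          ≤ (ℓ : ℝ) * Real.log p + (m : ℝ) * Real.log q ∧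
        (ℓ : ℝ) * Real.log p + (m : ℝ) * Real.log q ≤ Real.log n := by
  intro n hn
  have hlp : 0 < Real.log p := Real.log_pos (by exact_mod_cast hp)
  have hlq : 0 < Real.log q := Real.log_pos (by exact_mod_cast hq)
  have hln : 0 < Real.log n := Real.log_pos (by exact_mod_cast hn)
  set M := ⌈Real.log n / Real.log q⌉₊
  set δ := C₁ * (M : ℝ) ^ (-κ)
  have hM : 0 < M := Nat.ceil_pos.2 (div_pos hln hlq)
  have hdense (a : ℝ) (ha : 0 ≤ a) (haδ : a + δ ≤ 1) :
      ∃ m < M, Int.fract (Real.log q / Real.log p * m) ∈ Set.Icc a (a + δ) :=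
    hgap M hM _ Set.ordConnected_Icc (Set.Icc_subset_Icc ha haδ) (by
      rw [Real.volume_Icc, add_sub_cancel_left, ENNReal.toReal_ofReal']
      exact le_max_left _ _)
  obtain ⟨m, hmM, hfract⟩ := exists_lt_fract_sub_mul_le hM hdense (Real.log n / Real.log p)
  set y := Real.log n / Real.log p - Real.log q / Real.log p * m
  have hy : y * Real.log p = Real.log n - m * Real.log q := by
    simp only [y]
    field_simp
  have hy0 : 0 ≤ y := by
    have := (lt_div_iff₀ hlq).1 (Nat.lt_ceil.1 hmM)
    nlinarith
  have hℓ := Nat.floor_eq_sub_fract hy0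
  refine ⟨⌊y⌋₊, m, hmM, ?_, ?_⟩
  · nlinarith [mul_le_mul_of_nonneg_right hfract hlp.le]
  · nlinarith [mul_nonneg (Int.fract_nonneg y) hlp.le]

theorem exists_exponents_close_to_log
    (p q : ℕ) (hp : 1 < p) (hq : 1 < q)
    (C₁ κ : ℝ) (hC₁ : 0 < C₁) (hκ : 0 < κ)
    (hgap : ∀ M : ℕ, 1 ≤ M → ∀ J : Set ℝ, J.OrdConnected → J ⊆ Set.Icc 0 1 →
      C₁ * (M : ℝ) ^ (-κ) ≤ (volume J).toReal →
      ∃ m : ℕ, m < M ∧ Int.fract ((Real.log q / Real.log p) * m) ∈ J) :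
    ∀ n : ℕ, 1 < n →
      ∃ ℓ m : ℕ, m < ⌈Real.log n / Real.log q⌉₊ ∧
        Real.log n - C₁ * Real.log p * ((⌈Real.log n / Real.log q⌉₊ : ℝ)) ^ (-κ)
          ≤ (ℓ : ℝ) * Real.log p + (m : ℝ) * Real.log q ∧
        (ℓ : ℝ) * Real.log p + (m : ℝ) * Real.log q ≤ Real.log n :=
  exists_exponents_close_to_log_general p q hp hq C₁ κ hgap
end

section
/- Let N ≥ 2 be an integer and set T(N) = ∏_{j=1}^{r} (1 + ⌊log N / log b_j⌋). For every integer K with 1 ≤ K ≤ T(N)/2, the number of integers n ∈ {1, 2, …, N} that admit a multi-base representation of Hamming weight at most K is bounded above by Σ_{k=1}^{K} binom(T(N), k) · (|D| − 1)^k, which in turn is at most (|D| · T(N))^K. -/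
/-!
A power-product `B ≤ N` has every exponent `α_j ≤ ⌊log N / log b_j⌋ = Nat.log b_j N`, so at most `T`
power-products can occur in a representation of some `n ≤ N`. A representation of weight `k` is
determined by its support, a `k`-subset of these, and its `k` nonzero digits: there are at most
`C(T, k) (|D| - 1)^k` of them, and each represents one integer. Finally `C(T, k) ≤ T^k ≤ C(K, k) T^K`
for `1 ≤ k ≤ K`, and the binomial theorem sums these bounds to `((|D| - 1) + 1)^K T^K`.
-/

open Finset

section PowerProducts

variable {r : ℕ}

def powerProductsExpLeLog (b : Fin r → ℕ) (N : ℕ) : Finset ℕ :=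
  (Fintype.piFinset fun j => range (Nat.log (b j) N + 1)).image fun α => ∏ j, b j ^ α j

lemma card_powerProductsExpLeLog_le (b : Fin r → ℕ) (N : ℕ) :
    #(powerProductsExpLeLog b N) ≤ ∏ j, (Nat.log (b j) N + 1) :=
  card_image_le.trans_eq (by simp [Fintype.card_piFinset])

lemma IsPowerProduct.mem_powerProductsExpLeLog {b : Fin r → ℕ} (hb : ∀ j, 1 < b j) {B N : ℕ}
    (hB : IsPowerProduct r b B) (hBN : B ≤ N) : B ∈ powerProductsExpLeLog b N := by
  obtain ⟨α, rfl⟩ := hB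
  refine mem_image.mpr ⟨α, Fintype.mem_piFinset.mpr fun j => ?_, rfl⟩
  have hpow : b j ^ α j ≤ N :=
    (single_le_prod' (fun i _ => Nat.one_le_pow _ _ (hb i).le) (mem_univ j)).trans hBN
  exact mem_range.mpr (Nat.lt_succ_of_le (Nat.le_log_of_pow_le (hb j) hpow))

end PowerProducts

section FinsuppCount

variable {ι α : Type*} [DecidableEq ι] [Zero α] [DecidableEq α]

lemma card_filter_finsupp_card_support_eq_le (S : Finset ι) (D : Finset α) (k : ℕ) :
    #{d ∈ S.finsupp (fun _ => D) | #d.support = k} ≤ (#S).choose k * #(D.erase 0) ^ k := by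
  set W := {d ∈ S.finsupp (fun _ => D) | #d.support = k}
  have hmaps : ∀ d ∈ W, d.support ∈ powersetCard k S := by
    intro d hd
    obtain ⟨hd, hk⟩ := mem_filter.mp hd
    exact mem_powersetCard.mpr ⟨(mem_finsupp_iff.mp hd).1, hk⟩
  have hfiber : ∀ s ∈ powersetCard k S, #{d ∈ W | d.support = s} ≤ #(D.erase 0) ^ k := by
    intro s hs
    rw [← (mem_powersetCard.mp hs).2, ← prod_const, ← card_pi s fun _ => D.erase 0]
    refine card_le_card_of_injOn (fun d B _ => d B) (fun d hd => mem_pi.mpr fun B hB => ?_)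
      fun d₁ hd₁ d₂ hd₂ h => ?_
    · obtain ⟨hdW, rfl⟩ := mem_filter.mp hd
      have hdS := mem_finsupp_iff.mp (mem_filter.mp hdW).1
      exact mem_erase.mpr ⟨Finsupp.mem_support_iff.mp hB, hdS.2 B (hdS.1 hB)⟩
    · have h₁ := (mem_filter.mp hd₁).2
      have h₂ := (mem_filter.mp hd₂).2
      ext B
      by_cases hB : B ∈ s
      · exact congrFun₂ h B hB
      · rw [Finsupp.notMem_support_iff.mp (h₁ ▸ hB), Finsupp.notMem_support_iff.mp (h₂ ▸ hB)]
  calc #W ≤ #(D.erase 0) ^ k * #(powersetCard k S) :=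
        card_le_mul_card_image_of_maps_to hmaps _ hfiber
    _ = (#S).choose k * #(D.erase 0) ^ k := by rw [card_powersetCard, mul_comm]

lemma card_filter_finsupp_card_support_mem_le (S : Finset ι) (D : Finset α) (ks : Finset ℕ) :
    #{d ∈ S.finsupp (fun _ => D) | #d.support ∈ ks} ≤
      ∑ k ∈ ks, (#S).choose k * #(D.erase 0) ^ k := by
  set W := {d ∈ S.finsupp (fun _ => D) | #d.support ∈ ks}
  rw [card_eq_sum_card_fiberwise (s := W) (f := fun d => #d.support)
    fun d hd => (mem_filter.mp hd).2]
  gcongr with k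
  exact (card_le_card (filter_subset_filter _ (filter_subset _ _))).trans
    (card_filter_finsupp_card_support_eq_le S D k)

end FinsuppCount

lemma sum_Icc_choose_mul_pow_le (T c K : ℕ) :
    ∑ k ∈ Icc 1 K, T.choose k * c ^ k ≤ ((c + 1) * T) ^ K := by
  have hterm : ∀ k ∈ Icc 1 K, T.choose k * c ^ k ≤ c ^ k * K.choose k * T ^ K := by
    intro k hk
    obtain ⟨hk1, hkK⟩ := mem_Icc.mp hk
    have hT : T.choose k ≤ T ^ K := by
      rcases Nat.eq_zero_or_pos T with rfl | hT
      · simp [Nat.choose_eq_zero_of_lt (by omega : 0 < k)]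
      · exact (Nat.choose_le_pow T k).trans (Nat.pow_le_pow_right hT hkK)
    calc T.choose k * c ^ k ≤ T ^ K * c ^ k := Nat.mul_le_mul_right _ hT
      _ ≤ K.choose k * T ^ K * c ^ k :=
        Nat.mul_le_mul_right _ (Nat.le_mul_of_pos_left _ (Nat.choose_pos hkK))
      _ = c ^ k * K.choose k * T ^ K := by ring
  calc ∑ k ∈ Icc 1 K, T.choose k * c ^ k
      ≤ ∑ k ∈ range (K + 1), c ^ k * K.choose k * T ^ K :=
        (sum_le_sum hterm).trans <| sum_le_sum_of_subset <| by
          intro k hk; simp only [mem_Icc, mem_range] at hk ⊢; omega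
    _ = ((c + 1) * T) ^ K := by
      rw [mul_pow, add_pow, sum_mul]; simp only [one_pow, mul_one, Nat.cast_id]

section MultiBase

variable {r : ℕ} {b : Fin r → ℕ} {D : Finset ℕ} {n : ℕ} {d : ℕ →₀ ℕ}

lemma IsMultiBaseRepr.le_of_mem_support (h : IsMultiBaseRepr r b D n d) {B : ℕ}
    (hB : B ∈ d.support) : B ≤ n := by
  rw [h.2.2]
  calc B ≤ d B * B := Nat.le_mul_of_pos_left B (Nat.pos_of_ne_zero (Finsupp.mem_support_iff.mp hB))
    _ ≤ ∑ B ∈ d.support, d B * B :=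
      single_le_sum (f := fun B => d B * B) (fun _ _ => Nat.zero_le _) hB

lemma IsMultiBaseRepr.mem_finsupp_powerProductsExpLeLog (hb : ∀ j, 1 < b j)
    (h : IsMultiBaseRepr r b D n d) {N : ℕ} (hn : n ≤ N) :
    d ∈ (powerProductsExpLeLog b N).finsupp fun _ => D :=
  mem_finsupp_iff.mpr
    ⟨fun B hB => (h.2.1 B hB).mem_powerProductsExpLeLog hb ((h.le_of_mem_support hB).trans hn),
      fun B _ => h.1 B⟩

lemma IsMultiBaseRepr.support_nonempty (h : IsMultiBaseRepr r b D n d) (hn : n ≠ 0) :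
    d.support.Nonempty := by
  rw [nonempty_iff_ne_empty]
  rintro hd
  simp [h.2.2, hd] at hn

end MultiBase

theorem count_small_weight_integers_general
    (r : ℕ) (b : Fin r → ℕ) (hb : ∀ j, 1 < b j)
    (D : Finset ℕ) (hD0 : 0 ∈ D)
    (N : ℕ)
    (T : ℕ) (hT : T = ∏ j, (1 + ⌊Real.log N / Real.log (b j)⌋₊))
    (K : ℕ) :
    {n : ℕ | 1 ≤ n ∧ n ≤ N ∧ ∃ d : ℕ →₀ ℕ,
        IsMultiBaseRepr r b D n d ∧ d.support.card ≤ K}.ncard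
      ≤ ∑ k ∈ Finset.Icc 1 K, T.choose k * (D.card - 1) ^ k ∧
    ∑ k ∈ Finset.Icc 1 K, T.choose k * (D.card - 1) ^ k ≤ (D.card * T) ^ K := by
  have hcard : #(powerProductsExpLeLog b N) ≤ T := by
    simpa only [hT, Real.log_div_log, Real.natFloor_logb_natCast, add_comm] using card_powerProductsExpLeLog_le b N
  set R := {d ∈ (powerProductsExpLeLog b N).finsupp (fun _ => D) | #d.support ∈ Icc 1 K}
  have hsub : {n : ℕ | 1 ≤ n ∧ n ≤ N ∧ ∃ d : ℕ →₀ ℕ, IsMultiBaseRepr r b D n d ∧ #d.support ≤ K}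
      ⊆ R.image fun d => ∑ B ∈ d.support, d B * B := by
    rintro n ⟨hn1, hnN, d, hd, hK⟩
    have hweight : #d.support ∈ Icc 1 K :=
      mem_Icc.mpr ⟨card_pos.mpr (hd.support_nonempty (by omega)), hK⟩
    exact mem_image.mpr
      ⟨d, mem_filter.mpr ⟨hd.mem_finsupp_powerProductsExpLeLog hb hnN, hweight⟩, hd.2.2.symm⟩
  refine ⟨(Set.ncard_le_ncard hsub (finite_toSet _)).trans ?_, ?_⟩
  · rw [Set.ncard_coe_finset, ← card_erase_of_mem hD0]
    refine card_image_le.trans ((card_filter_finsupp_card_support_mem_le _ D _).trans ?_)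
    gcongr
  · have h := sum_Icc_choose_mul_pow_le T (#D - 1) K
    rwa [Nat.sub_add_cancel (card_pos.mpr ⟨0, hD0⟩)] at h

theorem count_small_weight_integers
    (r : ℕ) (hr : 1 ≤ r) (b : Fin r → ℕ) (hb : ∀ j, 1 < b j)
    (D : Finset ℕ) (hD0 : 0 ∈ D) (hD1 : 1 ∈ D)
    (N : ℕ) (hN : 2 ≤ N)
    (T : ℕ) (hT : T = ∏ j, (1 + ⌊Real.log N / Real.log (b j)⌋₊))
    (K : ℕ) (hK1 : 1 ≤ K) (hK2 : 2 * K ≤ T) :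
    {n : ℕ | 1 ≤ n ∧ n ≤ N ∧ ∃ d : ℕ →₀ ℕ,
        IsMultiBaseRepr r b D n d ∧ d.support.card ≤ K}.ncard
      ≤ ∑ k ∈ Finset.Icc 1 K, T.choose k * (D.card - 1) ^ k ∧
    ∑ k ∈ Finset.Icc 1 K, T.choose k * (D.card - 1) ^ k ≤ (D.card * T) ^ K :=
  count_small_weight_integers_general r b hb D hD0 N T hT K
end

section
/- Let s ≥ 1 be an integer and set T = ∏_{j=1}^{r} (1 + ⌊log(2^s) / log b_j⌋). If K is an integer with 1 ≤ K ≤ T/2 and every integer n ∈ {2^{s−1}+1, 2^{s−1}+2, …, 2^s} admits a multi-base representation of Hamming weight at most K, then (|D| · T)^K ≥ 2^{s−1}. -/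
/-!
A representation of weight at most `K` of a number `n ≤ 2^s` uses only power-products `B ≤ 2^s`,
and there are at most `T` of these since each exponent `α_j` is at most `⌊log 2^s / log b_j⌋`.
Padding with zero digits, such a representation is a list of `K` pairs (power-product, digit),
and it determines `n`. Hence the `2^(s-1)` numbers of the block `(2^(s-1), 2^s]` are at most
`(T |D|)^K` in number.
-/

open Finset

theorem Finsupp.exists_fin_sum_single_eq {α M : Type*} [DecidableEq α] [AddCommMonoid M]
    {S : Finset α} {D : Finset M} {a₀ : α} (ha₀ : a₀ ∈ S) (hD : 0 ∈ D) {K : ℕ} (f : α →₀ M) (hfS : f.support ⊆ S) (hfD : ∀ a, f a ∈ D)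
    (hfK : f.support.card ≤ K) :
    ∃ g : Fin K → α × M, (∀ i, g i ∈ S ×ˢ D) ∧ ∑ i, single (g i).1 (g i).2 = f := by
  induction K generalizing f with
  | zero =>
    obtain rfl : f = 0 := support_eq_empty.1 (card_eq_zero.1 (Nat.le_zero.1 hfK))
    exact ⟨fun i => i.elim0, fun i => i.elim0, by simp⟩
  | succ K ih =>
    rcases f.support.eq_empty_or_nonempty with hf | ⟨a, ha⟩
    · exact ⟨fun _ => (a₀, 0), fun _ => mem_product.2 ⟨ha₀, hD⟩, by simp [support_eq_empty.1 hf]⟩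
    obtain ⟨g, hgSD, hg⟩ := ih (f.erase a)
      (by rw [support_erase]; exact (Finset.erase_subset a _).trans hfS)
      (fun x => by rw [erase_apply]; split_ifs <;> simp [hD, hfD])
      (by rw [support_erase, card_erase_of_mem ha]; omega)
    refine ⟨Fin.cons (a, f a) g, Fin.cases (mem_product.2 ⟨hfS ha, hfD a⟩) hgSD, ?_⟩
    rw [Fin.sum_univ_succ]
    simpa [hg] using single_add_erase a f

theorem card_le_of_forall_sparse_repr {ι α M : Type*} [DecidableEq ι] [DecidableEq α]
    [AddCommMonoid M] {N : Finset ι} {S : Finset α} {D : Finset M} {K : ℕ}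
    (hS : S.Nonempty) (hD : 0 ∈ D) (value : (α →₀ M) → ι)
    (hN : ∀ n ∈ N, ∃ f : α →₀ M, value f = n ∧ f.support ⊆ S ∧ (∀ a, f a ∈ D) ∧
      f.support.card ≤ K) :
    N.card ≤ (S.card * D.card) ^ K := by
  obtain ⟨a₀, ha₀⟩ := hS
  have hsub : N ⊆ (Fintype.piFinset fun _ : Fin K => S ×ˢ D).image
      fun g => value (∑ i, Finsupp.single (g i).1 (g i).2) := by
    intro n hn
    obtain ⟨f, rfl, hfS, hfD, hfK⟩ := hN n hn
    obtain ⟨g, hgSD, hg⟩ := Finsupp.exists_fin_sum_single_eq ha₀ hD f hfS hfD hfK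
    exact mem_image.2 ⟨g, Fintype.mem_piFinset.2 hgSD, by rw [hg]⟩
  calc N.card ≤ _ := card_le_card hsub
    _ ≤ _ := card_image_le
    _ = (S.card * D.card) ^ K := by simp [card_product]

section PowerProducts

variable {r : ℕ} {b : Fin r → ℕ}

theorem isPowerProduct_one : IsPowerProduct r b 1 := ⟨0, by simp⟩

theorem card_filter_isPowerProduct_le_s12 [DecidablePred (IsPowerProduct r b)] (hb : ∀ j, 1 < b j) (X : ℕ) :
    ((Iic X).filter (IsPowerProduct r b)).card ≤ ∏ j, (1 + Nat.log (b j) X) := by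
  have hsub : (Iic X).filter (IsPowerProduct r b) ⊆
      (Fintype.piFinset fun j => range (1 + Nat.log (b j) X)).image
        fun α => ∏ j, b j ^ α j := by
    intro B hB
    obtain ⟨hBX, α, rfl⟩ := mem_filter.1 hB
    refine mem_image.2 ⟨α, Fintype.mem_piFinset.2 fun j => ?_, rfl⟩
    have hpos : 0 < ∏ i, b i ^ α i := prod_pos fun i _ => pow_pos (Nat.zero_lt_of_lt (hb i)) _
    have hpow : b j ^ α j ≤ X :=
      (Nat.le_of_dvd hpos (dvd_prod_of_mem (fun i => b i ^ α i) (mem_univ j))).trans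
        (mem_Iic.1 hBX)
    rw [mem_range]
    have := Nat.le_log_of_pow_le (hb j) hpow
    omega
  calc _ ≤ _ := card_le_card hsub
    _ ≤ _ := card_image_le
    _ = _ := by simp

end PowerProducts

theorem Finsupp.le_sum_mul_self_of_mem_support {d : ℕ →₀ ℕ} {B : ℕ} (hB : B ∈ d.support) :
    B ≤ ∑ C ∈ d.support, d C * C :=
  calc B ≤ d B * B := Nat.le_mul_of_pos_left _ (Nat.pos_of_ne_zero (mem_support_iff.1 hB))
    _ ≤ _ := Finset.single_le_sum (f := fun C => d C * C) (fun _ _ => Nat.zero_le _) hB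

theorem dyadic_block_weight_bound_general
    (r : ℕ) (b : Fin r → ℕ) (hb : ∀ j, 1 < b j)
    (D : Finset ℕ) (hD0 : 0 ∈ D)
    (s : ℕ) (hs : 1 ≤ s)
    (T : ℕ) (hT : T = ∏ j, (1 + ⌊Real.log (2 ^ s) / Real.log (b j)⌋₊))
    (K : ℕ)
    (hall : ∀ n : ℕ, 2 ^ (s - 1) < n → n ≤ 2 ^ s →
      ∃ d : ℕ →₀ ℕ, IsMultiBaseRepr r b D n d ∧ d.support.card ≤ K) :
    2 ^ (s - 1) ≤ (D.card * T) ^ K := by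
  classical
  set S := (Iic (2 ^ s)).filter (IsPowerProduct r b)
  have hST : S.card ≤ T := by
    have hlog : ∀ j, ⌊Real.log (2 ^ s) / Real.log (b j)⌋₊ = Nat.log (b j) (2 ^ s) := fun j => by
      rw [Real.log_div_log, ← Real.natFloor_logb_natCast]
      push_cast
      rfl
    calc S.card ≤ _ := card_filter_isPowerProduct_le_s12 hb (2 ^ s)
      _ = T := by simp only [hT, hlog]
  have hS : S.Nonempty :=
    ⟨1, mem_filter.2 ⟨mem_Iic.2 Nat.one_le_two_pow, isPowerProduct_one⟩⟩
  have hblock : (Ioc (2 ^ (s - 1)) (2 ^ s)).card = 2 ^ (s - 1) := by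
    obtain ⟨t, rfl⟩ := Nat.exists_eq_add_of_le' hs
    rw [Nat.card_Ioc, Nat.add_sub_cancel, pow_succ]
    omega
  calc 2 ^ (s - 1) = (Ioc (2 ^ (s - 1)) (2 ^ s)).card := hblock.symm
    _ ≤ (S.card * D.card) ^ K := by
      refine card_le_of_forall_sparse_repr hS hD0 (fun d => ∑ B ∈ d.support, d B * B) ?_
      intro n hn
      obtain ⟨hn₁, hn₂⟩ := mem_Ioc.1 hn
      obtain ⟨d, ⟨hdD, hdB, rfl⟩, hdK⟩ := hall n hn₁ hn₂
      refine ⟨d, rfl, fun B hB => mem_filter.2 ⟨?_, hdB B hB⟩, hdD, hdK⟩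
      exact mem_Iic.2 ((Finsupp.le_sum_mul_self_of_mem_support hB).trans hn₂)
    _ ≤ (D.card * T) ^ K := by
      rw [mul_comm]
      gcongr

theorem dyadic_block_weight_bound
    (r : ℕ) (hr : 1 ≤ r) (b : Fin r → ℕ) (hb : ∀ j, 1 < b j)
    (D : Finset ℕ) (hD0 : 0 ∈ D) (hD1 : 1 ∈ D)
    (s : ℕ) (hs : 1 ≤ s)
    (T : ℕ) (hT : T = ∏ j, (1 + ⌊Real.log (2 ^ s) / Real.log (b j)⌋₊))
    (K : ℕ) (hK1 : 1 ≤ K) (hK2 : 2 * K ≤ T)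
    (hall : ∀ n : ℕ, 2 ^ (s - 1) < n → n ≤ 2 ^ s →
      ∃ d : ℕ →₀ ℕ, IsMultiBaseRepr r b D n d ∧ d.support.card ≤ K) :
    2 ^ (s - 1) ≤ (D.card * T) ^ K :=
  dyadic_block_weight_bound_general r b hb D hD0 s hs T hT K hall
end

section
/- Let K_2 be a real number with 0 < K_2 < 1/r. Then for all sufficiently large integers s, there exists an integer n with 2^{s−1} < n ≤ 2^s such that n admits no multi-base representation of Hamming weight less than K_2 · (log n)/(log log n). -/
/-!
A counting argument. A power-product `B ≤ 2 ^ s` has all exponents at most `s`, so a number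
`n ≤ 2 ^ s` of weight at most `k` is a sum of `k` terms `c * B` drawn from a set of at most
`|D| (s + 1) ^ r` values; hence at most `(|D| (s + 1) ^ r) ^ k` numbers up to `2 ^ s` have
weight at most `k`. On the block `2 ^ (s - 1) < n ≤ 2 ^ s` the threshold
`K₂ log n / log log n` is at most `k ≈ K₂ s log 2 / log s`, and then
`k log (|D| (s + 1) ^ r) ≈ K₂ r s log 2 < (s - 1) log 2` because `K₂ r < 1`, so the
`2 ^ (s - 1)` numbers of the block cannot all have small weight.
-/

open Finset Filter Real
open scoped Pointwise

theorem Finset.sum_mem_card_nsmul {ι α : Type*} [DecidableEq α] [AddCommMonoid α]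
    (A : Finset ι) (T : Finset α) (g : ι → α) (hg : ∀ i ∈ A, g i ∈ T) :
    ∑ i ∈ A, g i ∈ #A • T := by
  classical
  induction A using Finset.induction_on with
  | empty => simp
  | insert a A ha ih =>
    rw [sum_insert ha, card_insert_of_notMem ha, succ_nsmul']
    exact add_mem_add (hg a (mem_insert_self a A)) (ih fun i hi => hg i (mem_insert_of_mem hi))

section Counting

variable {r : ℕ} (b : Fin r → ℕ) (D : Finset ℕ)

def boundedTerms (L : ℕ) : Finset ℕ :=
  (D ×ˢ Fintype.piFinset fun _ : Fin r => range (L + 1)).image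
    fun p => p.1 * ∏ j, b j ^ p.2 j

theorem card_boundedTerms_le (L : ℕ) : #(boundedTerms b D L) ≤ #D * (L + 1) ^ r := by
  refine card_image_le.trans_eq ?_
  simp [card_product, Fintype.card_piFinset]

variable {b}

theorem exponent_le_of_prod_pow_le_two_pow (hb : ∀ j, 1 < b j) {α : Fin r → ℕ} {L : ℕ}
    (h : ∏ j, b j ^ α j ≤ 2 ^ L) (j : Fin r) : α j ≤ L := by
  have hpow : 2 ^ α j ≤ 2 ^ L := calc
    2 ^ α j ≤ b j ^ α j := Nat.pow_le_pow_left (hb j) _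
    _ ≤ ∏ j, b j ^ α j :=
      single_le_prod' (fun i _ => Nat.one_le_pow _ _ (by linarith [hb i])) (mem_univ j)
    _ ≤ 2 ^ L := h
  exact (Nat.pow_le_pow_iff_right Nat.one_lt_two).mp hpow

theorem mul_mem_boundedTerms (hb : ∀ j, 1 < b j) {c B L : ℕ} (hc : c ∈ D)
    (hB : IsPowerProduct r b B) (hBL : B ≤ 2 ^ L) : c * B ∈ boundedTerms b D L := by
  obtain ⟨α, rfl⟩ := hB
  refine mem_image.mpr ⟨(c, α), mem_product.mpr ⟨hc, ?_⟩, rfl⟩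
  exact Fintype.mem_piFinset.mpr fun j =>
    mem_range_succ_iff.mpr (exponent_le_of_prod_pow_le_two_pow hb hBL j)

theorem mem_nsmul_boundedTerms (hb : ∀ j, 1 < b j) {n L : ℕ} {d : ℕ →₀ ℕ}
    (hd : IsMultiBaseRepr r b D n d) (hn : n ≤ 2 ^ L) :
    n ∈ #d.support • boundedTerms b D L := by
  obtain ⟨hdigits, hpp, rfl⟩ := hd
  refine sum_mem_card_nsmul _ _ _ fun B hB =>
    mul_mem_boundedTerms D hb (hdigits B) (hpp B hB) ?_
  calc B ≤ d B * B :=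
        Nat.le_mul_of_pos_left B (Nat.pos_of_ne_zero (Finsupp.mem_support_iff.mp hB))
    _ ≤ ∑ B ∈ d.support, d B * B := single_le_sum (f := fun B => d B * B) (by simp) hB
    _ ≤ 2 ^ L := hn

/-- Every `n ∈ S` is a sum of `k` elements of `boundedTerms b D L`, padded with zeros. -/
theorem card_le_of_forall_exists_repr (hb : ∀ j, 1 < b j) (hD0 : 0 ∈ D)
    {S : Finset ℕ} {L k : ℕ}
    (hS : ∀ n ∈ S, n ≤ 2 ^ L ∧ ∃ d, IsMultiBaseRepr r b D n d ∧ #d.support ≤ k) :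
    #S ≤ (#D * (L + 1) ^ r) ^ k := by
  have hzero : 0 ∈ boundedTerms b D L := by
    simpa using mul_mem_boundedTerms D hb hD0 (B := 1) ⟨0, by simp⟩ (Nat.one_le_two_pow)
  have hsub : S ⊆ k • boundedTerms b D L := fun n hn => by
    obtain ⟨hnL, d, hd, hk⟩ := hS n hn
    exact nsmul_subset_nsmul_right hzero hk (mem_nsmul_boundedTerms D hb hd hnL)
  calc #S ≤ #(k • boundedTerms b D L) := card_le_card hsub
    _ ≤ #(boundedTerms b D L) ^ k := card_nsmul_le
    _ ≤ (#D * (L + 1) ^ r) ^ k := Nat.pow_le_pow_left (card_boundedTerms_le b D L) k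

end Counting

noncomputable def dyadicWeightBound (K : ℝ) (s : ℕ) : ℝ :=
  K * s * log 2 / (log s - log 4)

theorem log_sub_log_four_le_log_log {s n : ℕ} (hs : 2 ≤ s) (hn : 2 ^ (s - 1) < n) :
    log s - log 4 ≤ log (log n) := by
  have hs' : (2 : ℝ) ≤ s := by exact_mod_cast hs
  have hlog_n : ((s : ℝ) - 1) * log 2 < log n := by
    have := log_lt_log (by positivity) (show (2 : ℝ) ^ (s - 1) < n by exact_mod_cast hn)
    rwa [log_pow, Nat.cast_sub (by omega), Nat.cast_one] at this
  have hquarter : (s : ℝ) / 4 < log n := by nlinarith [log_two_gt_d9]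
  calc log s - log 4 = log ((s : ℝ) / 4) := (log_div (by positivity) (by norm_num)).symm
    _ ≤ log (log n) := log_le_log (by positivity) hquarter.le

theorem div_log_log_le_dyadicWeightBound {K : ℝ} (hK : 0 ≤ K) {s n : ℕ} (hs : 4 < s)
    (hn₁ : 2 ^ (s - 1) < n) (hn₂ : n ≤ 2 ^ s) :
    K * log n / log (log n) ≤ dyadicWeightBound K s := by
  have hlog_s : log 4 < log s := log_lt_log (by norm_num) (by exact_mod_cast hs)
  have hlog_n : log n ≤ s * log 2 := by
    have := log_le_log (by exact_mod_cast (Nat.zero_le _).trans_lt hn₁)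
      (show (n : ℝ) ≤ (2 : ℝ) ^ s by exact_mod_cast hn₂)
    rwa [log_pow] at this
  rw [dyadicWeightBound, mul_assoc]
  exact div_le_div₀ (by positivity) (mul_le_mul_of_nonneg_left hlog_n hK) (by linarith)
    (log_sub_log_four_le_log_log (by omega) hn₁)

theorem eventually_dyadicWeightBound_mul_lt {K r A : ℝ} (hKr : K * r < 1) :
    ∀ᶠ s : ℕ in atTop, dyadicWeightBound K s * (r * log s + A) < (s - 1) * log 2 := by
  have hlog : Tendsto (fun s : ℕ => log s) atTop atTop :=
    tendsto_log_atTop.comp tendsto_natCast_atTop_atTop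
  filter_upwards [eventually_gt_atTop 0, hlog.eventually_gt_atTop (log 4),
    hlog.eventually_gt_atTop ((K * A + log 4 + 1) / (1 - K * r))] with s hs hs₄ hsA
  have hs : (0 : ℝ) < s := by exact_mod_cast hs
  have hgap : K * (r * log s + A) < log s - log 4 - 1 := by
    have := (div_lt_iff₀ (by linarith)).mp hsA
    nlinarith
  have hlog_le : log s ≤ s - 1 := log_le_sub_one_of_pos hs
  have hlog4 : 0 ≤ log 4 := log_nonneg (by norm_num)
  rw [dyadicWeightBound, div_mul_eq_mul_div, div_lt_iff₀ (by linarith)]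
  have key : K * s * (r * log s + A) < (s - 1) * (log s - log 4) := by
    nlinarith [mul_lt_mul_of_pos_left hgap hs]
  nlinarith [log_pos one_lt_two]

theorem eventually_pow_floor_dyadicWeightBound_lt {K : ℝ} {r m : ℕ} (hK : 0 ≤ K)
    (hKr : K * r < 1) (hm : 0 < m) :
    ∀ᶠ s : ℕ in atTop, (m * (s + 1) ^ r) ^ ⌊dyadicWeightBound K s⌋₊ < 2 ^ (s - 1) := by
  filter_upwards [eventually_dyadicWeightBound_mul_lt (A := log m + r * log 2) hKr,
    eventually_ge_atTop 5] with s hlt hs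
  set k := ⌊dyadicWeightBound K s⌋₊
  have hbound_nonneg : 0 ≤ dyadicWeightBound K s := by
    have : log 4 < log s := log_lt_log (by norm_num) (by exact_mod_cast hs)
    unfold dyadicWeightBound
    exact div_nonneg (by positivity) (by linarith)
  have hs₁ : (1 : ℝ) ≤ s := by exact_mod_cast (by omega : 1 ≤ s)
  have hlog_M : log ((m : ℝ) * (s + 1) ^ r) ≤ r * log s + (log m + r * log 2) := by
    have hs1 : log ((s : ℝ) + 1) ≤ log 2 + log s := by
      rw [← log_mul (by norm_num) (by positivity)]
      exact log_le_log (by positivity) (by linarith)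
    rw [log_mul (by positivity) (by positivity), log_pow]
    nlinarith [show (0 : ℝ) ≤ r from r.cast_nonneg]
  have hlog_M_nonneg : 0 ≤ log ((m : ℝ) * (s + 1) ^ r) :=
    log_nonneg (one_le_mul_of_one_le_of_one_le (by exact_mod_cast hm) (one_le_pow₀ (by linarith)))
  have hk_log : k * log ((m : ℝ) * (s + 1) ^ r) < (s - 1) * log 2 := calc
    _ ≤ dyadicWeightBound K s * log ((m : ℝ) * (s + 1) ^ r) :=
      mul_le_mul_of_nonneg_right (Nat.floor_le hbound_nonneg) hlog_M_nonneg
    _ ≤ dyadicWeightBound K s * (r * log s + (log m + r * log 2)) :=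
      mul_le_mul_of_nonneg_left hlog_M hbound_nonneg
    _ < _ := hlt
  have hreal : ((m : ℝ) * (s + 1) ^ r) ^ k < (2 : ℝ) ^ (s - 1) := by
    rw [← log_lt_log_iff (by positivity) (by positivity), log_pow, log_pow,
      Nat.cast_sub (by omega), Nat.cast_one]
    exact hk_log
  exact_mod_cast hreal

theorem exists_large_weight_in_dyadic_block_general
    (r : ℕ) (b : Fin r → ℕ) (hb : ∀ j, 1 < b j)
    (D : Finset ℕ) (hD0 : 0 ∈ D)
    (K₂ : ℝ) (hK₂pos : 0 < K₂) (hK₂lt : K₂ < 1 / r) :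
    ∃ s₀ : ℕ, ∀ s : ℕ, s₀ ≤ s →
      ∃ n : ℕ, 2 ^ (s - 1) < n ∧ n ≤ 2 ^ s ∧
        ∀ d : ℕ →₀ ℕ, IsMultiBaseRepr r b D n d →
          ¬ ((d.support.card : ℝ) < K₂ * Real.log n / Real.log (Real.log n)) := by
  have hKr : K₂ * r < 1 := by
    rcases r.eq_zero_or_pos with rfl | hr
    · simp
    · exact (lt_div_iff₀ (by exact_mod_cast hr)).mp hK₂lt
  obtain ⟨s₀, hs₀⟩ := eventually_atTop.mp <|
    (eventually_pow_floor_dyadicWeightBound_lt hK₂pos.le hKr (card_pos.mpr ⟨0, hD0⟩)).and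
      (eventually_gt_atTop 4)
  refine ⟨s₀, fun s hs => ?_⟩
  obtain ⟨hfew, hs₄⟩ := hs₀ s hs
  by_contra! hsmall
  have hblock : #(Ioc (2 ^ (s - 1)) (2 ^ s)) = 2 ^ (s - 1) := by
    rw [Nat.card_Ioc, show s = s - 1 + 1 by omega, pow_succ, Nat.add_sub_cancel]
    omega
  have hmany := card_le_of_forall_exists_repr D hb hD0 (S := Ioc (2 ^ (s - 1)) (2 ^ s))
    (k := ⌊dyadicWeightBound K₂ s⌋₊) fun n hn => by
      obtain ⟨hn₁, hn₂⟩ := mem_Ioc.mp hn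
      obtain ⟨d, hd, hweight⟩ := hsmall n hn₁ hn₂
      exact ⟨hn₂, d, hd, Nat.le_floor <|
        hweight.le.trans (div_log_log_le_dyadicWeightBound hK₂pos.le hs₄ hn₁ hn₂)⟩
  omega

theorem exists_large_weight_in_dyadic_block
    (r : ℕ) (hr : 1 ≤ r) (b : Fin r → ℕ) (hb : ∀ j, 1 < b j)
    (D : Finset ℕ) (hD0 : 0 ∈ D) (hD1 : 1 ∈ D)
    (K₂ : ℝ) (hK₂pos : 0 < K₂) (hK₂lt : K₂ < 1 / r) :
    ∃ s₀ : ℕ, ∀ s : ℕ, s₀ ≤ s →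
      ∃ n : ℕ, 2 ^ (s - 1) < n ∧ n ≤ 2 ^ s ∧
        ∀ d : ℕ →₀ ℕ, IsMultiBaseRepr r b D n d →
          ¬ ((d.support.card : ℝ) < K₂ * Real.log n / Real.log (Real.log n)) :=
  exists_large_weight_in_dyadic_block_general r b hb D hD0 K₂ hK₂pos hK₂lt
end
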